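/- Let y ∈ ℝⁿ, γ ≥ 0, α_1,...,α_{n-1} ≥ 0. Define ỹ_i = −Σ_{t=i}^n y_t for i ∈ [n+1] (so ỹ_{n+1} = 0), α̃_1 = α̃_{n+1} = 0 and α̃_{i+1} = α_i for i ∈ [n−1]. Let x* be the unique minimizer of (1/2)Σ_{t=1}^n (x_t − y_t)² + γ Σ_{t=1}^{n-1} α_t |x_{t+1} − x_t| and let w* be the unique minimizer of Σ_{i=1}^{n} (w_{i+1} − w_i)² subject to |w_i − ỹ_i| ≤ γ α̃_i for all i ∈ [n+1]. Then x*_t = w*_{t+1} − w*_t for all t ∈ [n]. -/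

import Mathlib

/-!
Perturbing the minimiser `x*` along `ε · 1[t ≥ k]` shows that the tail sums
`S k = ∑_{t ≥ k} (x*_t - y_t)` of the residual vanish at `k = 0` (and trivially at `k = n + 1`)
and that `-S (j + 1)` is a subgradient of `γ α_j |·|` at `x*_{j+1} - x*_j`. Hence
`w i = -∑_{t ≥ i} x*_t = ỹ_i - S i` is feasible for the spring problem and has differences `x*`.
Summation by parts and the subgradient condition give `⟨x*, D (v - w)⟩ ≥ 0` for every feasible `v`,
so `‖D v‖² ≥ ‖D w‖² + ‖D (v - w)‖²`, and a minimiser `w*` must satisfy `D w* = D w = x*`.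
-/

open Finset Filter Topology

lemma nonpos_of_forall_mul_le_sq_mul {a b : ℝ}
    (h : ∀ δ : ℝ, 0 < δ → δ < 1 → δ * a ≤ δ ^ 2 * b) : a ≤ 0 := by
  have hlim : Tendsto (fun δ : ℝ => δ * b) (𝓝[>] 0) (𝓝 0) :=
    tendsto_nhdsWithin_of_tendsto_nhds <| (continuous_mul_const b).tendsto' 0 0 (zero_mul b)
  refine ge_of_tendsto hlim ?_
  filter_upwards [Ioo_mem_nhdsGT one_pos] with δ ⟨hδ0, hδ1⟩
  have := h δ hδ0 hδ1
  rw [pow_two, mul_assoc] at this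
  exact le_of_mul_le_mul_left this hδ0

-- The first-order condition at `ε = 0`: `-s` is a subgradient of `c |·|` at `d`.
lemma abs_le_and_mul_eq_of_forall_nonneg {s c d m : ℝ} (hc : 0 ≤ c)
    (h : ∀ ε : ℝ, 0 ≤ ε * s + ε ^ 2 * m + c * (|d + ε| - |d|)) :
    |s| ≤ c ∧ s * d = -(c * |d|) := by
  have hkink : ∀ ε, 0 ≤ ε * s + ε ^ 2 * m + c * |ε| := fun ε => by
    nlinarith [h ε, abs_add_le d ε]
  have habs : |s| ≤ c := by
    refine abs_le.mpr ⟨?_, ?_⟩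
    · have := nonpos_of_forall_mul_le_sq_mul (a := -s - c) (b := m) fun δ hδ _ => by
        have := hkink δ
        rw [abs_of_pos hδ] at this
        linarith
      linarith
    · have := nonpos_of_forall_mul_le_sq_mul (a := s - c) (b := m) fun δ hδ _ => by
        have := hkink (-δ)
        rw [abs_neg, abs_of_pos hδ] at this
        linarith
      linarith
  -- `ε = -δ d` moves towards the kink: `|d + ε| = (1 - δ) |d|`
  have hsign := nonpos_of_forall_mul_le_sq_mul (a := s * d + c * |d|) (b := d ^ 2 * m)
    fun δ hδ hδ1 => by
      have := h (-(δ * d))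
      rw [show d + -(δ * d) = (1 - δ) * d by ring, abs_mul, abs_of_pos (by linarith)] at this
      linarith
  refine ⟨habs, le_antisymm (by linarith) ?_⟩
  calc -(c * |d|) ≤ -(|s| * |d|) := neg_le_neg (mul_le_mul_of_nonneg_right habs (abs_nonneg d))
    _ = -|s * d| := by rw [abs_mul]
    _ ≤ s * d := neg_abs_le _

lemma mul_add_nonpos_of_abs_le {a c d s : ℝ} (ha : |a| ≤ c) (hs : s * d = -(c * |d|)) :
    d * (a + s) ≤ 0 := by
  have : d * a ≤ |d| * c := (le_abs_self _).trans <| by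
    rw [abs_mul]; exact mul_le_mul_of_nonneg_left ha (abs_nonneg d)
  linarith

lemma Fin.sum_mul_succ_sub_castSucc {R : Type*} [CommRing R] {n : ℕ} (x : Fin (n + 1) → R)
    (u : Fin (n + 2) → R) :
    ∑ t, x t * (u t.succ - u t.castSucc)
      = x (Fin.last n) * u (Fin.last (n + 1)) - x 0 * u 0
        - ∑ j : Fin n, (x j.succ - x j.castSucc) * u j.succ.castSucc := by
  simp only [mul_sub, sub_mul, sum_sub_distrib]
  rw [Fin.sum_univ_castSucc fun t => x t * u t.succ, Fin.sum_univ_succ fun t => x t * u t.castSucc]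
  simp only [Fin.succ_castSucc, Fin.succ_last, Fin.castSucc_zero]
  ring

lemma Fin.forall_of_zero_of_last_of_succ_castSucc {n : ℕ} {P : Fin (n + 2) → Prop} (h0 : P 0)
    (hlast : P (Fin.last (n + 1))) (hint : ∀ j : Fin n, P j.succ.castSucc) : ∀ i, P i := by
  refine Fin.cases h0 (Fin.lastCases ?_ fun j => ?_)
  · exact Fin.succ_last n ▸ hlast
  · exact Fin.succ_castSucc j ▸ hint j

lemma sum_mul_succ_sub_castSucc_nonneg {n : ℕ} {x : Fin (n + 1) → ℝ} {u : Fin (n + 2) → ℝ}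
    (h0 : u 0 = 0) (hlast : u (Fin.last (n + 1)) = 0)
    (hint : ∀ j : Fin n, (x j.succ - x j.castSucc) * u j.succ.castSucc ≤ 0) :
    0 ≤ ∑ t, x t * (u t.succ - u t.castSucc) := by
  rw [Fin.sum_mul_succ_sub_castSucc, h0, hlast]
  linarith [sum_nonpos fun j (_ : j ∈ univ) => hint j]

lemma eq_zero_of_sum_add_sq_le {ι : Type*} [Fintype ι] {a b : ι → ℝ}
    (hab : 0 ≤ ∑ i, a i * b i) (hle : ∑ i, (a i + b i) ^ 2 ≤ ∑ i, a i ^ 2) (i : ι) : b i = 0 := by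
  have hexpand : ∑ i, (a i + b i) ^ 2 = ∑ i, a i ^ 2 + 2 * ∑ i, a i * b i + ∑ i, b i ^ 2 := by
    rw [mul_sum, ← sum_add_distrib, ← sum_add_distrib]
    exact sum_congr rfl fun i _ => by ring
  have hb : ∑ i, b i ^ 2 = 0 :=
    le_antisymm (by linarith) (sum_nonneg fun i _ => sq_nonneg (b i))
  exact pow_eq_zero_iff two_ne_zero |>.mp <|
    (sum_eq_zero_iff_of_nonneg fun i _ => sq_nonneg (b i)).mp hb i (mem_univ i)

lemma succ_sub_castSucc_eq_of_sum_sq_le {n : ℕ} {x : Fin (n + 1) → ℝ} {v w : Fin (n + 2) → ℝ}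
    (hw : ∀ t : Fin (n + 1), w t.succ - w t.castSucc = x t)
    (hvar : 0 ≤ ∑ t : Fin (n + 1), x t * ((v - w) t.succ - (v - w) t.castSucc))
    (hle : ∑ t : Fin (n + 1), (v t.succ - v t.castSucc) ^ 2
      ≤ ∑ t : Fin (n + 1), (w t.succ - w t.castSucc) ^ 2)
    (t : Fin (n + 1)) : x t = v t.succ - v t.castSucc := by
  have hle' : ∑ t, (x t + ((v - w) t.succ - (v - w) t.castSucc)) ^ 2 ≤ ∑ t, x t ^ 2 := by
    convert hle using 3 with t _ t _
    · rw [← hw t, Pi.sub_apply, Pi.sub_apply]; ring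
    · rw [hw]
  have := eq_zero_of_sum_add_sq_le hvar hle' t
  rw [Pi.sub_apply, Pi.sub_apply] at this
  linarith [hw t]

namespace FusedLasso

variable {n : ℕ}

section TailSum

variable {M : Type*}

def tailSum [AddCommMonoid M] (x : Fin (n + 1) → M) (k : ℕ) : M :=
  ∑ t ∈ univ.filter (fun t : Fin (n + 1) => k ≤ (t : ℕ)), x t

lemma tailSum_of_lt [AddCommMonoid M] (x : Fin (n + 1) → M) {k : ℕ} (hk : n < k) :
    tailSum x k = 0 := by
  refine sum_eq_zero fun t ht => absurd (mem_filter.mp ht).2 ?_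
  omega

lemma tailSum_eq_add_tailSum_succ [AddCommMonoid M] (x : Fin (n + 1) → M) (t : Fin (n + 1)) :
    tailSum x t = x t + tailSum x (t + 1) := by
  have hsplit : univ.filter (fun u : Fin (n + 1) => (t : ℕ) ≤ u)
      = insert t (univ.filter fun u : Fin (n + 1) => (t : ℕ) + 1 ≤ u) := by
    ext u
    simp only [mem_filter, mem_insert, mem_univ, true_and, Fin.ext_iff]
    omega
  rw [tailSum, hsplit, sum_insert (by simp)]
  rfl

lemma tailSum_sub [AddCommGroup M] (x y : Fin (n + 1) → M) (k : ℕ) :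
    tailSum (x - y) k = tailSum x k - tailSum y k :=
  sum_sub_distrib ..

end TailSum

def tailIndicator (k : ℕ) (t : Fin (n + 1)) : ℝ := if k ≤ (t : ℕ) then 1 else 0

lemma sum_tailIndicator_mul (k : ℕ) (x : Fin (n + 1) → ℝ) :
    ∑ t, tailIndicator k t * x t = tailSum x k := by
  simp [tailIndicator, tailSum, sum_filter]

lemma tailIndicator_succ_sub_castSucc (k : ℕ) (j : Fin n) :
    tailIndicator k j.succ - tailIndicator k j.castSucc = if (j : ℕ) + 1 = k then 1 else 0 := by
  simp only [tailIndicator, Fin.val_succ, Fin.val_castSucc]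
  split_ifs <;> (try norm_num) <;> omega

noncomputable def objective (y : Fin (n + 1) → ℝ) (γ : ℝ) (α : Fin n → ℝ) (x : Fin (n + 1) → ℝ) :
    ℝ :=
  (1 / 2) * ∑ t, (x t - y t) ^ 2 + γ * ∑ t : Fin n, α t * |x t.succ - x t.castSucc|

lemma objective_add_smul_tailIndicator (y x : Fin (n + 1) → ℝ) (γ : ℝ) (α : Fin n → ℝ)
    (k : ℕ) (ε : ℝ) :
    objective y γ α (x + ε • tailIndicator k) = objective y γ α x
      + (ε * tailSum (x - y) k + ε ^ 2 / 2 * ∑ t : Fin (n + 1), tailIndicator k t ^ 2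
        + γ * ∑ j : Fin n, α j * (|x j.succ - x j.castSucc + if (j : ℕ) + 1 = k then ε else 0|
          - |x j.succ - x j.castSucc|)) := by
  have hquad : ∑ t : Fin (n + 1), ((x + ε • tailIndicator k : Fin (n + 1) → ℝ) t - y t) ^ 2
      = ∑ t, (x t - y t) ^ 2 + 2 * ε * tailSum (x - y) k
        + ε ^ 2 * ∑ t : Fin (n + 1), tailIndicator k t ^ 2 := by
    rw [← sum_tailIndicator_mul, mul_sum, mul_sum, ← sum_add_distrib, ← sum_add_distrib]
    refine sum_congr rfl fun t _ => ?_
    simp only [Pi.add_apply, Pi.smul_apply, Pi.sub_apply, smul_eq_mul]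
    ring
  have hjump (j : Fin n) : (x + ε • tailIndicator k : Fin (n + 1) → ℝ) j.succ
      - (x + ε • tailIndicator k : Fin (n + 1) → ℝ) j.castSucc
      = x j.succ - x j.castSucc + if (j : ℕ) + 1 = k then ε else 0 := by
    have := tailIndicator_succ_sub_castSucc k j
    simp only [Pi.add_apply, Pi.smul_apply, smul_eq_mul]
    split_ifs at this ⊢ <;> linear_combination ε * this
  simp only [objective, hquad, hjump, mul_sub, sum_sub_distrib]
  ring

section Optimality

variable {y xs : Fin (n + 1) → ℝ} {γ : ℝ} {α : Fin n → ℝ}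

lemma tailSum_residual_zero (hxs : ∀ x, objective y γ α xs ≤ objective y γ α x) :
    tailSum (xs - y) 0 = 0 := by
  refine abs_nonpos_iff.mp (abs_le_and_mul_eq_of_forall_nonneg (c := 0) (d := 0)
    (m := (∑ t : Fin (n + 1), tailIndicator 0 t ^ 2) / 2) le_rfl fun ε => ?_).1
  have := hxs (xs + ε • tailIndicator 0)
  simp only [objective_add_smul_tailIndicator, Nat.add_one_ne_zero, if_false, add_zero, sub_self,
    mul_zero, sum_const_zero] at this
  linarith

lemma abs_tailSum_residual_le_and_mul_eq (hγ : 0 ≤ γ) (hα : ∀ j, 0 ≤ α j)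
    (hxs : ∀ x, objective y γ α xs ≤ objective y γ α x) (j : Fin n) :
    |tailSum (xs - y) (j + 1)| ≤ γ * α j ∧ tailSum (xs - y) (j + 1) * (xs j.succ - xs j.castSucc)
      = -(γ * α j * |xs j.succ - xs j.castSucc|) := by
  refine abs_le_and_mul_eq_of_forall_nonneg (mul_nonneg hγ (hα j))
    (m := (∑ t : Fin (n + 1), tailIndicator (j + 1) t ^ 2) / 2) fun ε => ?_
  have := hxs (xs + ε • tailIndicator (j + 1))
  rw [objective_add_smul_tailIndicator, sum_eq_single j (fun i _ hij => by simp [Fin.val_inj, hij])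
    (by simp)] at this
  simp only [if_true] at this
  linarith

end Optimality

end FusedLasso

open FusedLasso

theorem weighted_fused_lasso_spring_representation (n : ℕ)
    (y : Fin (n + 1) → ℝ) (γ : ℝ) (hγ : 0 ≤ γ)
    (α : Fin n → ℝ) (hα : ∀ t, 0 ≤ α t)
    (yt αt : Fin (n + 2) → ℝ)
    (hyt : ∀ i : Fin (n + 2),
      yt i = -∑ t ∈ Finset.univ.filter (fun t : Fin (n + 1) => (i : ℕ) ≤ (t : ℕ)), y t)
    (hαt0 : αt 0 = 0) (hαtlast : αt (Fin.last (n + 1)) = 0)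
    (hαt : ∀ i : Fin n, αt i.succ.castSucc = α i)
    (xs : Fin (n + 1) → ℝ)
    (hxs : ∀ x : Fin (n + 1) → ℝ,
      (1 / 2) * ∑ t, (xs t - y t) ^ 2 + γ * ∑ t : Fin n, α t * |xs t.succ - xs t.castSucc| ≤
      (1 / 2) * ∑ t, (x t - y t) ^ 2 + γ * ∑ t : Fin n, α t * |x t.succ - x t.castSucc|)
    (ws : Fin (n + 2) → ℝ)
    (hwsfeas : ∀ i, |ws i - yt i| ≤ γ * αt i)
    (hws : ∀ w : Fin (n + 2) → ℝ, (∀ i, |w i - yt i| ≤ γ * αt i) →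
      (∑ i : Fin (n + 1), (ws i.succ - ws i.castSucc) ^ 2) ≤
        ∑ i : Fin (n + 1), (w i.succ - w i.castSucc) ^ 2) :
    ∀ t : Fin (n + 1), xs t = ws t.succ - ws t.castSucc := by
  have hS0 := tailSum_residual_zero hxs
  have hSlast := tailSum_of_lt (xs - y) (Nat.lt_succ_self n)
  have hsub := abs_tailSum_residual_le_and_mul_eq hγ hα hxs
  set w : Fin (n + 2) → ℝ := fun i => -tailSum xs i
  have hDw (t : Fin (n + 1)) : w t.succ - w t.castSucc = xs t := by
    simp [w, tailSum_eq_add_tailSum_succ xs t]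
  have hresid (i : Fin (n + 2)) : yt i - w i = tailSum (xs - y) i := by
    rw [hyt, tailSum_sub]; simp only [w, tailSum]; ring
  have hw : ∀ i, |w i - yt i| ≤ γ * αt i := by
    refine Fin.forall_of_zero_of_last_of_succ_castSucc ?_ ?_ fun j => ?_ <;>
      rw [abs_sub_comm, hresid]
    · simp [hS0, hαt0]
    · simp [hSlast, hαtlast]
    · rw [hαt]; simpa using (hsub j).1
  have hu (i : Fin (n + 2)) : (ws - w) i = (ws i - yt i) + tailSum (xs - y) i := by
    rw [← hresid, Pi.sub_apply]; ring
  have hend (i : Fin (n + 2)) (hi : αt i = 0) : ws i - yt i = 0 :=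
    abs_nonpos_iff.mp (by simpa [hi] using hwsfeas i)
  have hvar : 0 ≤ ∑ t, xs t * ((ws - w) t.succ - (ws - w) t.castSucc) := by
    refine sum_mul_succ_sub_castSucc_nonneg ?_ ?_ fun j => ?_
    · simpa [hu, hend 0 hαt0] using hS0
    · simpa [hu, hend _ hαtlast] using hSlast
    · rw [hu]
      refine mul_add_nonpos_of_abs_le (hαt j ▸ hwsfeas j.succ.castSucc) ?_
      simpa using (hsub j).2
  exact succ_sub_castSucc_eq_of_sum_sq_le hDw hvar (hws w hw)
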